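/- arXiv:1804.02608 — 3 statements merged into one kernel-verified Lean document; each statement's English description precedes it below -/
import Mathlib

section
/- Let p_1, …, p_n and q be in [0,1] with q ≥ 0, let p_v(S) = g·Σ_{k=0}^{n} Δ_k·Σ_{S' ⊆ S, |S'|=k} Π_{u∈S'} p_u describe a vertex follow probability as a function of its set of parent probabilities, where Δ_k = Σ_{i=0}^{k} (-1)^{k-i} C(k,i) f(i) for a function f : ℕ → ℝ, and g > 0 a constant. If the parent set {1,…,n} with probabilities p_1,…,p_n is augmented by one more parent with follow probability q, and the new follow probability equals (1−q)·p_v({1,…,n}) + q·g·Σ_{k=0}^{n} Δ'_k·Σ_{|S'|=k} Π_{u∈S'} p_u with Δ'_k = Σ_{i=0}^{k} (-1)^{k-i} C(k,i) f(i+1), then the new follow probability equals g·Σ_{k=0}^{n+1} Δ_k·Σ_{S' ⊆ {1,…,n+1}, |S'|=k} Π_{u∈S'} p_u (where p_{n+1} = q). -/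
/-!
The inner sums are the elementary symmetric polynomials `e_k` of the parent probabilities.
Adding a parent with probability `q` gives `e_{k+1}(q, p) = e_{k+1}(p) + q e_k(p)`, and
`Δ_{k+1} = Δ'_k - Δ_k` because `Δ'_k` is the `k`-th finite difference of `f` at `1`.
Substituting both and shifting the summation index turns the sum over the enlarged parent set
into the mixture `(1 - q) Σ Δ_k e_k + q Σ Δ'_k e_k`.
-/

/-- The `k`-th forward finite difference of `f` at `0`:
`Δ_k = Σ_{i=0}^{k} (-1)^(k-i) C(k,i) f(i)`. -/
noncomputable def Delta (f : ℕ → ℝ) (k : ℕ) : ℝ :=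
  ∑ i ∈ Finset.range (k + 1), (-1 : ℝ) ^ (k - i) * (Nat.choose k i) * f i

open Finset

theorem Delta_eq_fwdDiff_iter (f : ℕ → ℝ) (k : ℕ) : Delta f k = (fwdDiff 1)^[k] f 0 := by
  simp [Delta, fwdDiff_iter_eq_sum_shift, mul_assoc]

theorem Delta_succ (f : ℕ → ℝ) (k : ℕ) :
    Delta f (k + 1) = Delta (fun i => f (i + 1)) k - Delta f k := by
  simp only [Delta_eq_fwdDiff_iter, Function.iterate_succ_apply', fwdDiff, fwdDiff_iter_comp_add,
    zero_add]

namespace Multiset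

variable {R : Type*} [CommSemiring R]

theorem esymm_zero (s : Multiset R) : s.esymm 0 = 1 := by
  simp [esymm]

theorem esymm_eq_zero_of_card_lt {s : Multiset R} {k : ℕ} (h : card s < k) : s.esymm k = 0 := by
  simp [esymm, powersetCard_eq_empty k h]

theorem esymm_cons_succ (a : R) (s : Multiset R) (k : ℕ) :
    (a ::ₘ s).esymm (k + 1) = s.esymm (k + 1) + a * s.esymm k := by
  simp [esymm, map_map, sum_map_mul_left]

end Multiset

theorem sum_Delta_mul_esymm_cons (f : ℕ → ℝ) (a : ℝ) (s : Multiset ℝ) {N : ℕ}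
    (hN : Multiset.card s < N) :
    ∑ k ∈ range (N + 1), Delta f k * (a ::ₘ s).esymm k =
      (1 - a) * ∑ k ∈ range N, Delta f k * s.esymm k +
        a * ∑ k ∈ range N, Delta (fun i => f (i + 1)) k * s.esymm k := by
  have shift : ∑ k ∈ range N, Delta f (k + 1) * s.esymm (k + 1) =
      ∑ k ∈ range N, Delta f k * s.esymm k - Delta f 0 := by
    have h₁ := sum_range_succ' (fun k => Delta f k * s.esymm k) N
    have h₂ := sum_range_succ (fun k => Delta f k * s.esymm k) N
    rw [Multiset.esymm_eq_zero_of_card_lt hN] at h₂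
    rw [Multiset.esymm_zero] at h₁
    linarith
  have new_parent : ∑ k ∈ range N, Delta f (k + 1) * (a * s.esymm k) =
      a * (∑ k ∈ range N, Delta (fun i => f (i + 1)) k * s.esymm k -
        ∑ k ∈ range N, Delta f k * s.esymm k) := by
    rw [← sum_sub_distrib, mul_sum]
    exact sum_congr rfl fun k _ => by rw [Delta_succ]; ring
  rw [sum_range_succ', Multiset.esymm_zero]
  simp only [Multiset.esymm_cons_succ, mul_add, sum_add_distrib]
  rw [shift, new_parent]
  ring

theorem followProb_add_parent_general (n : ℕ) (f : ℕ → ℝ) (g : ℝ)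
    (p : ℕ → ℝ) :
    (1 - p n) *
        (g * ∑ k ∈ Finset.range (n + 1), Delta f k *
          ∑ S ∈ (Finset.range n).powersetCard k, ∏ u ∈ S, p u) +
      p n *
        (g * ∑ k ∈ Finset.range (n + 1), Delta (fun i => f (i + 1)) k *
          ∑ S ∈ (Finset.range n).powersetCard k, ∏ u ∈ S, p u) =
      g * ∑ k ∈ Finset.range (n + 2), Delta f k *
          ∑ S ∈ (Finset.range (n + 1)).powersetCard k, ∏ u ∈ S, p u := by
  have parents_val : (range (n + 1)).val.map p = p n ::ₘ (range n).val.map p := by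
    rw [range_add_one, insert_val_of_notMem notMem_range_self, Multiset.map_cons]
  simp only [← esymm_map_val, parents_val]
  rw [sum_Delta_mul_esymm_cons f (p n) _ (by simp)]
  ring

/-- Inductive step for the follow probability with independent parents:
adding one more parent, with follow probability `q = p n`, to the parent set
`{0, …, n-1}`.  The old follow probability is
`g · Σ_{k=0}^{n} Δ_k · Σ_{S ⊆ {0,…,n-1}, |S|=k} Π_{u∈S} p u`, the new one is
the stated mixture with `Δ'_k = Σ_i (-1)^(k-i) C(k,i) f(i+1)`, and the result
is the same formula over the enlarged parent set `{0, …, n}`. -/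
theorem followProb_add_parent (n : ℕ) (f : ℕ → ℝ) (g : ℝ) (hg : 0 < g)
    (p : ℕ → ℝ) (hp : ∀ u, u ≤ n → 0 ≤ p u ∧ p u ≤ 1) :
    (1 - p n) *
        (g * ∑ k ∈ Finset.range (n + 1), Delta f k *
          ∑ S ∈ (Finset.range n).powersetCard k, ∏ u ∈ S, p u) +
      p n *
        (g * ∑ k ∈ Finset.range (n + 1), Delta (fun i => f (i + 1)) k *
          ∑ S ∈ (Finset.range n).powersetCard k, ∏ u ∈ S, p u) =
      g * ∑ k ∈ Finset.range (n + 2), Delta f k *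
          ∑ S ∈ (Finset.range (n + 1)).powersetCard k, ∏ u ∈ S, p u :=
  followProb_add_parent_general n f g p
end

section
/- Let a vertex v have n independent parents, where parent u follows the agent with probability p_u ∈ [0,1]. Let the overlap φ of v be the number of parents who followed, and suppose the follow probability of v given overlap φ equals g·f(φ), where g > 0 and f : ℕ → ℝ. Then the unconditional follow probability of v equals g·Σ_{k=0}^{n} Δ_k·Σ_{S ⊆ P, |S|=k} Π_{u∈S} p_u, where P is the parent set and Δ_k = Σ_{i=0}^{k} (-1)^{k-i} C(k,i) f(i). -/
open Finset

theorem sum_choose_mul_Delta (f : ℕ → ℝ) {m n : ℕ} (hmn : m ≤ n) :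
    ∑ k ∈ range (n + 1), (m.choose k : ℝ) * Delta f k = f m := by
  have newton := shift_eq_sum_fwdDiff_iter (1 : ℕ) f m 0
  simp only [zero_add, smul_eq_mul, mul_one, nsmul_eq_mul] at newton
  rw [newton, eq_comm]
  simp_rw [Delta_eq_fwdDiff_iter]
  refine sum_subset (range_subset_range.2 (Nat.succ_le_succ hmn)) fun k _ hk => ?_
  rw [Nat.choose_eq_zero_of_lt (by simpa using hk), Nat.cast_zero, zero_mul]

section IndependentParents

variable {α R : Type*} [DecidableEq α] [CommRing R]

/-- The probability that exactly the parents in `S ⊆ A` follow, parent `u` independently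
following with probability `p u`. -/
def bernoulliWeight (A : Finset α) (p : α → R) (S : Finset α) : R :=
  (∏ u ∈ S, p u) * ∏ u ∈ A \ S, (1 - p u)

theorem sum_Icc_bernoulliWeight {A T : Finset α} (hTA : T ⊆ A) (p : α → R) :
    ∑ S ∈ Icc T A, bernoulliWeight A p S = ∏ u ∈ T, p u := by
  have hinj : Set.InjOn (T ∪ ·) ((A \ T).powerset : Set (Finset α)) := fun V hV W hW hVW => by
    simp only [coe_powerset, Set.mem_preimage, Set.mem_powerset_iff, coe_subset] at hV hW
    rw [← union_sdiff_cancel_left (disjoint_of_subset_right hV disjoint_sdiff),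
      ← union_sdiff_cancel_left (disjoint_of_subset_right hW disjoint_sdiff)]
    exact congrArg (· \ T) hVW
  rw [Icc_eq_image_powerset hTA, sum_image hinj]
  calc ∑ V ∈ (A \ T).powerset, bernoulliWeight A p (T ∪ V)
      = ∑ V ∈ (A \ T).powerset,
          (∏ u ∈ T, p u) * ((∏ u ∈ V, p u) * ∏ u ∈ (A \ T) \ V, (1 - p u)) := by
        refine sum_congr rfl fun V hV => ?_
        have hTV : Disjoint T V := disjoint_of_subset_right (mem_powerset.1 hV) disjoint_sdiff
        rw [bernoulliWeight, prod_union hTV, sdiff_sdiff_left, sup_eq_union, mul_assoc]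
    _ = (∏ u ∈ T, p u) * ∏ u ∈ A \ T, (p u + (1 - p u)) := by rw [← mul_sum, prod_add]
    _ = ∏ u ∈ T, p u := by simp

theorem sum_bernoulliWeight_mul_choose (A : Finset α) (p : α → R) (k : ℕ) :
    ∑ S ∈ A.powerset, bernoulliWeight A p S * (#S).choose k =
      ∑ T ∈ A.powersetCard k, ∏ u ∈ T, p u := by
  calc ∑ S ∈ A.powerset, bernoulliWeight A p S * (#S).choose k
      = ∑ S ∈ A.powerset, ∑ _T ∈ S.powersetCard k, bernoulliWeight A p S := by
        simp [card_powersetCard, mul_comm]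
    _ = ∑ T ∈ A.powersetCard k, ∑ S ∈ Icc T A, bernoulliWeight A p S := by
        refine sum_comm' fun S T => ?_
        simp only [mem_powerset, mem_powersetCard, mem_Icc]
        constructor
        · rintro ⟨hSA, hTS, hT⟩
          exact ⟨⟨hTS, hSA⟩, hTS.trans hSA, hT⟩
        · rintro ⟨⟨hTS, hSA⟩, -, hT⟩
          exact ⟨hSA, hTS, hT⟩
    _ = ∑ T ∈ A.powersetCard k, ∏ u ∈ T, p u :=
        sum_congr rfl fun T hT => sum_Icc_bernoulliWeight (mem_powersetCard.1 hT).1 p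

theorem sum_bernoulliWeight_mul_eq_sum_Delta_mul (A : Finset α) (p : α → ℝ) (f : ℕ → ℝ) :
    ∑ S ∈ A.powerset, bernoulliWeight A p S * f #S =
      ∑ k ∈ range (#A + 1), Delta f k * ∑ T ∈ A.powersetCard k, ∏ u ∈ T, p u := by
  calc ∑ S ∈ A.powerset, bernoulliWeight A p S * f #S
      = ∑ S ∈ A.powerset, ∑ k ∈ range (#A + 1),
          Delta f k * (bernoulliWeight A p S * (#S).choose k) := by
        refine sum_congr rfl fun S hS => ?_
        rw [← sum_choose_mul_Delta f (card_le_card (mem_powerset.1 hS)), mul_sum]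
        exact sum_congr rfl fun k _ => by ring
    _ = _ := by
        rw [sum_comm]
        simp_rw [← mul_sum, sum_bernoulliWeight_mul_choose]

end IndependentParents

theorem followProb_formula_general (n : ℕ) (f : ℕ → ℝ) (g : ℝ) (p : ℕ → ℝ) :
    ∑ S ∈ (Finset.range n).powerset,
        ((∏ u ∈ S, p u) * (∏ u ∈ Finset.range n \ S, (1 - p u))) * (g * f S.card) =
      g * ∑ k ∈ Finset.range (n + 1), Delta f k *
          ∑ S ∈ (Finset.range n).powersetCard k, ∏ u ∈ S, p u := by
  have h := sum_bernoulliWeight_mul_eq_sum_Delta_mul (range n) p f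
  rw [card_range] at h
  rw [← h, mul_sum]
  exact sum_congr rfl fun S _ => by rw [bernoulliWeight]; ring

/-- A vertex `v` has `n` independent parents, parent `u` following with
probability `p u`.  The overlap `φ` is the number of parents that followed, and
the follow probability of `v` given overlap `φ` is `g · f φ`.  The unconditional
follow probability, `E[g · f(φ)] = Σ_{S} (Π_{u∈S} p u)(Π_{u∉S} (1 - p u)) · g · f |S|`,
equals `g · Σ_{k=0}^{n} Δ_k · Σ_{S ⊆ P, |S|=k} Π_{u∈S} p u`. -/
theorem followProb_formula (n : ℕ) (f : ℕ → ℝ) (g : ℝ) (hg : 0 < g)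
    (p : ℕ → ℝ) (hp : ∀ u, u < n → 0 ≤ p u ∧ p u ≤ 1) :
    ∑ S ∈ (Finset.range n).powerset,
        ((∏ u ∈ S, p u) * (∏ u ∈ Finset.range n \ S, (1 - p u))) * (g * f S.card) =
      g * ∑ k ∈ Finset.range (n + 1), Delta f k *
          ∑ S ∈ (Finset.range n).powersetCard k, ∏ u ∈ S, p u :=
  followProb_formula_general n f g p
end

section
/- Let G = (V, E) be a finite directed acyclic graph and suppose Bernoulli follow events are generated sequentially by a policy (permutation of V) as follows: when v is processed, it succeeds with probability p_v(φ_v) where φ_v is the number of previously-processed in-neighbors of v that succeeded, and p_v is strictly increasing in φ_v. Then every policy maximizing the expected total number of successes Σ_{v∈V} E[X_v] is a linear extension of G (i.e., every vertex is processed after all of its in-neighbors). -/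
open Finset

/-- Expected total number of successes when the vertices in the list are
processed in order: when `v` is processed, its overlap `φ` is the number of
already-successful in-neighbors (the set `s`), and `v` succeeds with
probability `p v φ`, conditionally independently of everything else. -/
noncomputable def expFollows {V : Type*} [DecidableEq V]
    (e : V → V → Prop) [DecidableRel e] (p : V → ℕ → ℝ) :
    List V → Finset V → ℝ
  | [], _ => 0
  | v :: rest, s =>
      let φ := (s.filter (fun u => e u v)).card
      p v φ * (1 + expFollows e p rest (insert v s)) +
        (1 - p v φ) * expFollows e p rest s

/-!
Swapping two adjacent vertices that are not joined by an edge does not change the expected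
number of successes: each of them sees the same overlap in either order. Moving `y` in front of
an out-neighbour `x` strictly increases it, because `x` then counts `y`'s possible success in its
overlap, and the expected number of later successes is monotone in the set of earlier successes.
So an optimal policy can be bubble-sorted along the topological order `ord`: an adjacent
inversion is never an edge (swapping it would improve the policy), so swapping it keeps the
policy optimal and lowers the number of inversions. The sorted policy has no back edge, and
since only non-edges were swapped, neither has the original one.
-/

namespace List

variable {α : Type*}

theorem Pairwise.append_cons_cons_of_swap {R : α → α → Prop} {P Q : List α} {x y : α}
    (h : (P ++ y :: x :: Q).Pairwise R) (hxy : R x y) : (P ++ x :: y :: Q).Pairwise R := by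
  simp only [pairwise_append, pairwise_cons, mem_cons] at h ⊢
  grind

theorem Pairwise.idxOf_lt_idxOf [BEq α] [LawfulBEq α] {R : α → α → Prop} {l : List α}
    (hl : l.Pairwise R) {u v : α} (hu : u ∈ l) (hv : v ∈ l) (hne : u ≠ v) (hvu : ¬ R v u) :
    l.idxOf u < l.idxOf v := by
  refine lt_of_le_of_ne (not_lt.1 fun hlt => hvu ?_) (hne <| (idxOf_inj hu).1 ·)
  simpa only [getElem_idxOf] using pairwise_iff_getElem.1 hl _ _
    (idxOf_lt_length_iff.2 hv) (idxOf_lt_length_iff.2 hu) hlt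

theorem exists_eq_append_cons_cons_lt_of_not_pairwise {β : Type*} [LinearOrder β] {f : α → β}
    {l : List α} (h : ¬ l.Pairwise (fun a b => f a ≤ f b)) :
    ∃ P x y Q, l = P ++ x :: y :: Q ∧ f y < f x := by
  have : IsTrans α (fun a b => f a ≤ f b) := ⟨fun _ _ _ => le_trans⟩
  rw [← isChain_iff_pairwise, isChain_iff_forall_rel_of_append_cons_cons] at h
  push Not at h
  obtain ⟨x, y, P, Q, rfl, hlt⟩ := h
  exact ⟨P, x, y, Q, rfl, hlt⟩

def inversionCount {β : Type*} [LinearOrder β] (f : α → β) : List α → ℕ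
  | [] => 0
  | a :: l => l.countP (fun b => f b < f a) + inversionCount f l

theorem inversionCount_append_swap_lt {β : Type*} [LinearOrder β] (f : α → β) {x y : α}
    (hyx : f y < f x) (P Q : List α) :
    inversionCount f (P ++ y :: x :: Q) < inversionCount f (P ++ x :: y :: Q) := by
  induction P with
  | nil =>
    simp only [nil_append, inversionCount, countP_cons, hyx, not_lt.2 hyx.le, decide_true,
      decide_false, if_true, Bool.false_eq_true, if_false]
    omega
  | cons a P ih =>
    simp only [cons_append, inversionCount, countP_append, countP_cons]
    omega

end List

namespace expFollows

variable {V : Type*} [DecidableEq V] (e : V → V → Prop) [DecidableRel e] {p : V → ℕ → ℝ}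

theorem cons_eq (v : V) (rest : List V) (s : Finset V) :
    expFollows e p (v :: rest) s =
      p v #{u ∈ s | e u v} * (1 + expFollows e p rest (insert v s)) +
        (1 - p v #{u ∈ s | e u v}) * expFollows e p rest s := rfl

variable {e}

theorem mono_right (hp0 : ∀ w φ, 0 ≤ p w φ) (hp1 : ∀ w φ, p w φ ≤ 1)
    (hmono : ∀ w, Monotone (p w)) (L : List V) {s t : Finset V} (hst : s ⊆ t) :
    expFollows e p L s ≤ expFollows e p L t := by
  induction L generalizing s t with
  | nil => rfl
  | cons v rest ih =>
    have hp : p v #{u ∈ s | e u v} ≤ p v #{u ∈ t | e u v} :=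
      hmono v (card_le_card (filter_subset_filter _ hst))
    have hins := ih (insert_subset_insert v hst)
    have hs := ih hst
    -- the gain `1 + F(insert v t) - F t` of a success is nonnegative
    have hgain := ih (subset_insert v t)
    rw [cons_eq, cons_eq]
    nlinarith [mul_nonneg (sub_nonneg.2 hp) (by linarith : (0:ℝ) ≤
        1 + expFollows e p rest (insert v t) - expFollows e p rest t),
      mul_nonneg (hp0 v #{u ∈ s | e u v}) (sub_nonneg.2 hins),
      mul_nonneg (sub_nonneg.2 (hp1 v #{u ∈ s | e u v})) (sub_nonneg.2 hs)]

theorem swap_sub (x y : V) (Q : List V) (s : Finset V) (hxy : ¬ e x y) :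
    expFollows e p (y :: x :: Q) s - expFollows e p (x :: y :: Q) s =
      p y #{u ∈ s | e u y} * (p x #{u ∈ insert y s | e u x} - p x #{u ∈ s | e u x}) *
        (1 + expFollows e p Q (insert x (insert y s)) - expFollows e p Q (insert y s)) := by
  have hy : #{u ∈ insert x s | e u y} = #{u ∈ s | e u y} := by
    rw [filter_insert, if_neg hxy]
  simp only [cons_eq, hy, insert_comm y x]
  ring

theorem swap_eq (x y : V) (Q : List V) (s : Finset V) (hxy : ¬ e x y) (hyx : ¬ e y x) :
    expFollows e p (x :: y :: Q) s = expFollows e p (y :: x :: Q) s := by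
  have h := swap_sub (p := p) x y Q s hxy
  rw [filter_insert, if_neg hyx, sub_self, mul_zero, zero_mul, sub_eq_zero] at h
  exact h.symm

theorem swap_lt (hpos : ∀ w φ, 0 < p w φ) (hp1 : ∀ w φ, p w φ ≤ 1)
    (hmono : ∀ w, StrictMono (p w)) (x y : V) (Q : List V) {s : Finset V}
    (hxy : ¬ e x y) (hyx : e y x) (hys : y ∉ s) :
    expFollows e p (x :: y :: Q) s < expFollows e p (y :: x :: Q) s := by
  have hcard : #{u ∈ insert y s | e u x} = #{u ∈ s | e u x} + 1 := by
    rw [filter_insert, if_pos hyx, card_insert_of_notMem (fun h => hys (mem_filter.1 h).1)]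
  have hgain : expFollows e p Q (insert y s) ≤ expFollows e p Q (insert x (insert y s)) :=
    mono_right (fun w φ => (hpos w φ).le) hp1 (fun w => (hmono w).monotone) Q
      (subset_insert x _)
  have hdiff := swap_sub (p := p) x y Q s hxy
  rw [hcard] at hdiff
  have := mul_pos (mul_pos (hpos y #{u ∈ s | e u y})
    (sub_pos.2 (hmono x (Nat.lt_succ_self #{u ∈ s | e u x}))))
    (by linarith : (0:ℝ) < 1 + expFollows e p Q (insert x (insert y s)) -
      expFollows e p Q (insert y s))
  linarith

theorem append_left_eq {A B : List V} (h : ∀ s, expFollows e p A s = expFollows e p B s)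
    (P : List V) (s : Finset V) : expFollows e p (P ++ A) s = expFollows e p (P ++ B) s := by
  induction P generalizing s with
  | nil => exact h s
  | cons a P ih => simp only [List.cons_append, cons_eq, ih]

theorem append_left_lt (hp0 : ∀ w φ, 0 ≤ p w φ) (hp1 : ∀ w φ, p w φ ≤ 1)
    {A B : List V} {y : V} (h : ∀ s, y ∉ s → expFollows e p A s < expFollows e p B s)
    {P : List V} (hyP : y ∉ P) {s : Finset V} (hys : y ∉ s) :
    expFollows e p (P ++ A) s < expFollows e p (P ++ B) s := by
  induction P generalizing s with
  | nil => exact h s hys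
  | cons a P ih =>
    rw [List.mem_cons, not_or] at hyP
    have hins := ih hyP.2 (s := insert a s) (by simp [hyP.1, hys])
    have hs := ih hyP.2 hys
    simp only [List.cons_append, cons_eq]
    rcases (hp0 a #{u ∈ s | e u a}).eq_or_lt with hpa | hpa
    · rw [← hpa]
      linarith
    · nlinarith [mul_pos hpa (sub_pos.2 hins),
        mul_nonneg (sub_nonneg.2 (hp1 a #{u ∈ s | e u a})) (sub_pos.2 hs).le]

theorem pairwise_not_back_edge_of_forall_perm_le {β : Type*} [LinearOrder β] {ord : V → β}
    (hacyc : ∀ u v, e u v → ord u < ord v)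
    (hpos : ∀ w φ, 0 < p w φ) (hp1 : ∀ w φ, p w φ ≤ 1)
    (hmono : ∀ w, StrictMono (p w)) {L : List V} (hnd : L.Nodup)
    (hopt : ∀ L' : List V, L'.Perm L → expFollows e p L' ∅ ≤ expFollows e p L ∅) :
    L.Pairwise (fun a b => ¬ e b a) := by
  induction hn : L.inversionCount ord using Nat.strong_induction_on generalizing L with
  | _ n ih =>
    by_cases hsorted : L.Pairwise (fun a b => ord a ≤ ord b)
    · exact hsorted.imp fun hab hba => hab.not_gt (hacyc _ _ hba)
    obtain ⟨P, x, y, Q, rfl, hyx_ord⟩ :=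
      List.exists_eq_append_cons_cons_lt_of_not_pairwise hsorted
    have hxy : ¬ e x y := fun h => lt_asymm hyx_ord (hacyc x y h)
    have hperm : (P ++ y :: x :: Q).Perm (P ++ x :: y :: Q) := (List.Perm.swap x y Q).append_left P
    by_cases hyx : e y x
    · have hyP : y ∉ P := fun h => List.disjoint_of_nodup_append hnd h (by simp)
      exact absurd (hopt _ hperm) <| not_le.2 <|
        append_left_lt (fun w φ => (hpos w φ).le) hp1
          (fun s hys => swap_lt hpos hp1 hmono x y Q hxy hyx hys) hyP (notMem_empty y)
    · have heq := append_left_eq (p := p) (fun s => swap_eq x y Q s hxy hyx) P ∅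
      refine List.Pairwise.append_cons_cons_of_swap ?_ hyx
      exact ih _ (hn ▸ List.inversionCount_append_swap_lt ord hyx_ord P Q) (hperm.nodup_iff.2 hnd)
        (fun L' h' => heq ▸ hopt L' (h'.trans hperm)) rfl

end expFollows

theorem optimal_policy_is_linear_extension_general {V : Type*} [DecidableEq V]
    (e : V → V → Prop) [DecidableRel e]
    (ord : V → ℕ) (hacyc : ∀ u v, e u v → ord u < ord v)
    (p : V → ℕ → ℝ)
    (hp01 : ∀ w φ, 0 < p w φ ∧ p w φ < 1)
    (hmono : ∀ w φ φ', φ < φ' → p w φ < p w φ')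
    (L : List V) (hL : L.Nodup ∧ ∀ w : V, w ∈ L)
    (hopt : ∀ L' : List V, L'.Nodup → (∀ w : V, w ∈ L') →
      expFollows e p L' ∅ ≤ expFollows e p L ∅) :
    ∀ u v, e u v → L.idxOf u < L.idxOf v := by
  obtain ⟨hnd, hmem⟩ := hL
  have hpw := expFollows.pairwise_not_back_edge_of_forall_perm_le hacyc (fun w φ => (hp01 w φ).1)
    (fun w φ => (hp01 w φ).2.le) hmono hnd
    (fun L' h' => hopt L' (h'.nodup_iff.2 hnd) (fun w => h'.mem_iff.2 (hmem w)))
  intro u v huv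
  exact hpw.idxOf_lt_idxOf (hmem u) (hmem v) (ne_of_apply_ne ord (hacyc u v huv).ne)
    (not_not.2 huv)

/-- On a finite DAG, with follow probabilities `p v φ` strictly in `(0,1)` and
strictly increasing in the overlap `φ`, every ordering (policy) maximizing the
expected total number of successes is a linear extension of the DAG: every
vertex is processed after all of its in-neighbors. -/
theorem optimal_policy_is_linear_extension {V : Type*} [Fintype V] [DecidableEq V]
    (e : V → V → Prop) [DecidableRel e]
    (ord : V → ℕ) (hacyc : ∀ u v, e u v → ord u < ord v)
    (p : V → ℕ → ℝ)
    (hp01 : ∀ w φ, 0 < p w φ ∧ p w φ < 1)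
    (hmono : ∀ w φ φ', φ < φ' → p w φ < p w φ')
    (L : List V) (hL : L.Nodup ∧ ∀ w : V, w ∈ L)
    (hopt : ∀ L' : List V, L'.Nodup → (∀ w : V, w ∈ L') →
      expFollows e p L' ∅ ≤ expFollows e p L ∅) :
    ∀ u v, e u v → L.idxOf u < L.idxOf v :=
  optimal_policy_is_linear_extension_general e ord hacyc p hp01 hmono L hL hopt
end
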